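/- arXiv:2505.20207 — 2 statements merged into one kernel-verified Lean document; each statement's English description precedes it below -/
import Mathlib

section
/- The scope-inclusion relation incl of scoped GPU concurrency is not transitive: there exist atomic events a, b, c on the same location, with a having scope cta and executed by a thread of CTA cta₁ of GPU gpu₁, b having scope gpu and executed by a thread of gpu₁, and c having scope cta and executed by a thread of a CTA cta₂ ≠ cta₁ of gpu₁, such that incl(a,b) and incl(b,c) hold but incl(a,c) does not hold. -/
/-- Scopes of scoped GPU memory accesses. -/
inductive Scope | cta | gpu | sys
  deriving DecidableEq

/-- A GPU thread is identified by a pair of a CTA identifier and a GPU identifier. -/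
structure GThread (C G : Type*) where
  cta : C
  gpu : G

/-- An (atomic) event: its executing thread, its scope, and the location it accesses. -/
structure GEvent (C G L : Type*) where
  thread : GThread C G
  scope : Scope
  loc : L

/-- The scope of event `e` includes thread `t`. -/
def scopeIncludes {C G L : Type*} (e : GEvent C G L) (t : GThread C G) : Prop :=
  match e.scope with
  | Scope.sys => True
  | Scope.gpu => t.gpu = e.thread.gpu
  | Scope.cta => t.cta = e.thread.cta ∧ t.gpu = e.thread.gpu

/-- Scope inclusion between two same-location atomic events: the scope of one
includes the thread of the other. -/
def incl {C G L : Type*} (a b : GEvent C G L) : Prop :=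
  a.loc = b.loc ∧ (scopeIncludes a b.thread ∨ scopeIncludes b a.thread)

/-- the scope-inclusion relation is not transitive. -/
theorem incl_not_transitive {C G L : Type*} (cta₁ cta₂ : C) (gpu₁ : G) (X : L)
    (hne : cta₁ ≠ cta₂) :
    ∃ a b c : GEvent C G L,
      a.loc = X ∧ b.loc = X ∧ c.loc = X ∧
      a.scope = Scope.cta ∧ a.thread.cta = cta₁ ∧ a.thread.gpu = gpu₁ ∧
      b.scope = Scope.gpu ∧ b.thread.gpu = gpu₁ ∧
      c.scope = Scope.cta ∧ c.thread.cta = cta₂ ∧ c.thread.gpu = gpu₁ ∧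
      incl a b ∧ incl b c ∧ ¬ incl a c := by
  refine ⟨⟨⟨cta₁, gpu₁⟩, Scope.cta, X⟩, ⟨⟨cta₁, gpu₁⟩, Scope.gpu, X⟩,
    ⟨⟨cta₂, gpu₁⟩, Scope.cta, X⟩, rfl, rfl, rfl, rfl, rfl, rfl, rfl, rfl, rfl, rfl, rfl,
    ⟨rfl, Or.inl ⟨rfl, rfl⟩⟩, ⟨rfl, Or.inl rfl⟩, ?_⟩
  rintro ⟨-, h | h⟩
  · exact hne h.1.symm
  · exact hne h.1
end

section
/- A sub-execution of an SRC11-consistent execution is SRC11-consistent (the restriction case of Lemma A.1): let po ⊆ po', rf ⊆ rf', co ⊆ co', rmw ⊆ rmw' be binary relations on the event type E (with the location map loc, the scope-inclusion relation incl, and all event-classification predicates held fixed). If the primed execution (po',rf',co',rmw') satisfies the four SRC11 axioms — (Coherence) hb';eco'^? is irreflexive, (Atomicity) rmw' ∩ (fr';co') is empty, (SC) incl ∩ psc' is acyclic, (No-Thin-Air) po' ∪ rf' is acyclic — then the unprimed execution (po,rf,co,rmw) also satisfies all four axioms. -/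
/-! Every SRC11 relation is built from `po`, `rf`, `co`, `rmw` by composition, union,
intersection, closures, location restriction and inversion, and the one inversion (in `fr`)
is applied to `rf` alone; all of these are monotone, so each derived relation of the
sub-execution is contained in its primed counterpart. The axioms assert irreflexivity,
acyclicity or emptiness, which pass to sub-relations. -/

namespace SRC11

variable {E Loc : Type*}

/-- Relational composition `r;s`. -/
def rcomp (r s : E → E → Prop) : E → E → Prop := fun a c => ∃ b, r a b ∧ s b c
/-- Union of relations. -/
def runion (r s : E → E → Prop) : E → E → Prop := fun a b => r a b ∨ s a b
/-- Intersection of relations. -/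
def rinter (r s : E → E → Prop) : E → E → Prop := fun a b => r a b ∧ s a b
/-- Inverse `r⁻¹`. -/
def rinv (r : E → E → Prop) : E → E → Prop := fun a b => r b a
/-- Identity relation restricted to a predicate: `[A]`. -/
def rid (A : E → Prop) : E → E → Prop := fun a b => a = b ∧ A a
/-- Reflexive closure `r^?`. -/
def ropt (r : E → E → Prop) : E → E → Prop := fun a b => a = b ∨ r a b
/-- Transitive closure `r⁺`. -/
def rtrans (r : E → E → Prop) : E → E → Prop := Relation.TransGen r
/-- Reflexive-transitive closure `r^*`. -/
def rstar (r : E → E → Prop) : E → E → Prop := Relation.ReflTransGen r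
/-- `r|loc` : restriction to same-location pairs. -/
def sameLoc (loc : E → Loc) (r : E → E → Prop) : E → E → Prop :=
  fun a b => r a b ∧ loc a = loc b
/-- `r|≠loc` : restriction to different-location pairs. -/
def diffLoc (loc : E → Loc) (r : E → E → Prop) : E → E → Prop :=
  fun a b => r a b ∧ loc a ≠ loc b
/-- A relation is irreflexive. -/
def Irrefl (r : E → E → Prop) : Prop := ∀ a, ¬ r a a
/-- A relation is acyclic if its transitive closure is irreflexive. -/
def Acyclic (r : E → E → Prop) : Prop := Irrefl (rtrans r)

/-- from-read: `fr = rf⁻¹;co`. -/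
def fr (rf co : E → E → Prop) : E → E → Prop := rcomp (rinv rf) co

/-- extended coherence order: `eco = (rf ∪ co ∪ fr)⁺`. -/
def eco (rf co : E → E → Prop) : E → E → Prop :=
  rtrans (runion rf (runion co (fr rf co)))

/-- release sequence: `rseq = [W];(po|loc)^?;[Wrlx];((incl ∩ rf);rmw)^*`. -/
def rseq (loc : E → Loc) (W Wrlx : E → Prop) (incl po rf rmw : E → E → Prop) :
    E → E → Prop :=
  rcomp (rid W) (rcomp (ropt (sameLoc loc po))
    (rcomp (rid Wrlx) (rstar (rcomp (rinter incl rf) rmw))))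

/-- `prel = [Erel];([F];po)^?`. -/
def prel (Erel F : E → Prop) (po : E → E → Prop) : E → E → Prop :=
  rcomp (rid Erel) (ropt (rcomp (rid F) po))

/-- `pacq = (po;[F])^?;[Eacq]`. -/
def pacq (Eacq F : E → Prop) (po : E → E → Prop) : E → E → Prop :=
  rcomp (ropt (rcomp po (rid F))) (rid Eacq)

/-- synchronizes-with: `sw = prel;rseq;(incl ∩ rf);pacq`. -/
def sw (loc : E → Loc) (W Wrlx Erel Eacq F : E → Prop)
    (incl po rf rmw : E → E → Prop) : E → E → Prop :=
  rcomp (prel Erel F po) (rcomp (rseq loc W Wrlx incl po rf rmw)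
    (rcomp (rinter incl rf) (pacq Eacq F po)))

/-- happens-before: `hb = (po ∪ (incl ∩ sw))⁺`. -/
def hb (loc : E → Loc) (W Wrlx Erel Eacq F : E → Prop)
    (incl po rf rmw : E → E → Prop) : E → E → Prop :=
  rtrans (runion po (rinter incl (sw loc W Wrlx Erel Eacq F incl po rf rmw)))

/-- `scb = po ∪ (po|≠loc;hb;po|≠loc) ∪ hb|loc ∪ co ∪ fr`. -/
def scb (loc : E → Loc) (W Wrlx Erel Eacq F : E → Prop)
    (incl po rf co rmw : E → E → Prop) : E → E → Prop :=
  runion po (runion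
    (rcomp (diffLoc loc po)
      (rcomp (hb loc W Wrlx Erel Eacq F incl po rf rmw) (diffLoc loc po)))
    (runion (sameLoc loc (hb loc W Wrlx Erel Eacq F incl po rf rmw))
      (runion co (fr rf co))))

/-- `pscb = ([Esc] ∪ [Fsc];hb^?);scb;([Esc] ∪ hb^?;[Fsc])`. -/
def pscb (loc : E → Loc) (W Wrlx Erel Eacq F Esc Fsc : E → Prop)
    (incl po rf co rmw : E → E → Prop) : E → E → Prop :=
  rcomp (runion (rid Esc)
      (rcomp (rid Fsc) (ropt (hb loc W Wrlx Erel Eacq F incl po rf rmw))))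
    (rcomp (scb loc W Wrlx Erel Eacq F incl po rf co rmw)
      (runion (rid Esc)
        (rcomp (ropt (hb loc W Wrlx Erel Eacq F incl po rf rmw)) (rid Fsc))))

/-- `pscf = [Fsc];(hb ∪ hb;eco;hb);[Fsc]`. -/
def pscf (loc : E → Loc) (W Wrlx Erel Eacq F Fsc : E → Prop)
    (incl po rf co rmw : E → E → Prop) : E → E → Prop :=
  rcomp (rid Fsc)
    (rcomp (runion (hb loc W Wrlx Erel Eacq F incl po rf rmw)
        (rcomp (hb loc W Wrlx Erel Eacq F incl po rf rmw)
          (rcomp (eco rf co) (hb loc W Wrlx Erel Eacq F incl po rf rmw))))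
      (rid Fsc))

/-- `psc = pscb ∪ pscf`. -/
def psc (loc : E → Loc) (W Wrlx Erel Eacq F Esc Fsc : E → Prop)
    (incl po rf co rmw : E → E → Prop) : E → E → Prop :=
  runion (pscb loc W Wrlx Erel Eacq F Esc Fsc incl po rf co rmw)
    (pscf loc W Wrlx Erel Eacq F Fsc incl po rf co rmw)

end SRC11

namespace SRC11

variable {E Loc : Type*} {loc : E → Loc} {W Wrlx Erel Eacq F Esc Fsc : E → Prop}
  {incl r r' s s' po po' rf rf' co co' rmw rmw' : E → E → Prop}

theorem rcomp_mono (hr : r ≤ r') (hs : s ≤ s') : rcomp r s ≤ rcomp r' s' :=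
  fun _ _ ⟨b, hab, hbc⟩ => ⟨b, hr _ _ hab, hs _ _ hbc⟩

theorem runion_mono (hr : r ≤ r') (hs : s ≤ s') : runion r s ≤ runion r' s' :=
  fun a b h => h.imp (hr a b) (hs a b)

theorem rinter_mono (hr : r ≤ r') (hs : s ≤ s') : rinter r s ≤ rinter r' s' :=
  fun a b h => ⟨hr a b h.1, hs a b h.2⟩

theorem rinv_mono (hr : r ≤ r') : rinv r ≤ rinv r' :=
  fun a b h => hr b a h

theorem ropt_mono (hr : r ≤ r') : ropt r ≤ ropt r' :=
  fun a b h => h.imp id (hr a b)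

theorem rtrans_mono (hr : r ≤ r') : rtrans r ≤ rtrans r' :=
  Relation.TransGen.mono hr

theorem rstar_mono (hr : r ≤ r') : rstar r ≤ rstar r' :=
  Relation.ReflTransGen.mono hr

theorem sameLoc_mono (hr : r ≤ r') : sameLoc loc r ≤ sameLoc loc r' :=
  fun a b h => ⟨hr a b h.1, h.2⟩

theorem diffLoc_mono (hr : r ≤ r') : diffLoc loc r ≤ diffLoc loc r' :=
  fun a b h => ⟨hr a b h.1, h.2⟩

theorem Irrefl.anti (h : Irrefl r') (hr : r ≤ r') : Irrefl r :=
  fun a ha => h a (hr a a ha)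

theorem Acyclic.anti (h : Acyclic r') (hr : r ≤ r') : Acyclic r :=
  Irrefl.anti h (rtrans_mono hr)

theorem fr_mono (hrf : rf ≤ rf') (hco : co ≤ co') : fr rf co ≤ fr rf' co' :=
  rcomp_mono (rinv_mono hrf) hco

theorem eco_mono (hrf : rf ≤ rf') (hco : co ≤ co') : eco rf co ≤ eco rf' co' :=
  rtrans_mono (runion_mono hrf (runion_mono hco (fr_mono hrf hco)))

theorem rseq_mono (hpo : po ≤ po') (hrf : rf ≤ rf') (hrmw : rmw ≤ rmw') :
    rseq loc W Wrlx incl po rf rmw ≤ rseq loc W Wrlx incl po' rf' rmw' :=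
  rcomp_mono le_rfl <| rcomp_mono (ropt_mono (sameLoc_mono hpo)) <|
    rcomp_mono le_rfl <| rstar_mono (rcomp_mono (rinter_mono le_rfl hrf) hrmw)

theorem prel_mono (hpo : po ≤ po') : prel Erel F po ≤ prel Erel F po' :=
  rcomp_mono le_rfl (ropt_mono (rcomp_mono le_rfl hpo))

theorem pacq_mono (hpo : po ≤ po') : pacq Eacq F po ≤ pacq Eacq F po' :=
  rcomp_mono (ropt_mono (rcomp_mono hpo le_rfl)) le_rfl

theorem sw_mono (hpo : po ≤ po') (hrf : rf ≤ rf') (hrmw : rmw ≤ rmw') :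
    sw loc W Wrlx Erel Eacq F incl po rf rmw ≤ sw loc W Wrlx Erel Eacq F incl po' rf' rmw' :=
  rcomp_mono (prel_mono hpo) <| rcomp_mono (rseq_mono hpo hrf hrmw) <|
    rcomp_mono (rinter_mono le_rfl hrf) (pacq_mono hpo)

theorem hb_mono (hpo : po ≤ po') (hrf : rf ≤ rf') (hrmw : rmw ≤ rmw') :
    hb loc W Wrlx Erel Eacq F incl po rf rmw ≤ hb loc W Wrlx Erel Eacq F incl po' rf' rmw' :=
  rtrans_mono (runion_mono hpo (rinter_mono le_rfl (sw_mono hpo hrf hrmw)))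

theorem scb_mono (hpo : po ≤ po') (hrf : rf ≤ rf') (hco : co ≤ co') (hrmw : rmw ≤ rmw') :
    scb loc W Wrlx Erel Eacq F incl po rf co rmw ≤
      scb loc W Wrlx Erel Eacq F incl po' rf' co' rmw' :=
  have hhb := hb_mono hpo hrf hrmw
  runion_mono hpo <|
    runion_mono (rcomp_mono (diffLoc_mono hpo) (rcomp_mono hhb (diffLoc_mono hpo))) <|
    runion_mono (sameLoc_mono hhb) (runion_mono hco (fr_mono hrf hco))

theorem pscb_mono (hpo : po ≤ po') (hrf : rf ≤ rf') (hco : co ≤ co') (hrmw : rmw ≤ rmw') :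
    pscb loc W Wrlx Erel Eacq F Esc Fsc incl po rf co rmw ≤
      pscb loc W Wrlx Erel Eacq F Esc Fsc incl po' rf' co' rmw' :=
  have hhb := ropt_mono (hb_mono hpo hrf hrmw)
  rcomp_mono (runion_mono le_rfl (rcomp_mono le_rfl hhb)) <|
    rcomp_mono (scb_mono hpo hrf hco hrmw) (runion_mono le_rfl (rcomp_mono hhb le_rfl))

theorem pscf_mono (hpo : po ≤ po') (hrf : rf ≤ rf') (hco : co ≤ co') (hrmw : rmw ≤ rmw') :
    pscf loc W Wrlx Erel Eacq F Fsc incl po rf co rmw ≤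
      pscf loc W Wrlx Erel Eacq F Fsc incl po' rf' co' rmw' :=
  have hhb := hb_mono hpo hrf hrmw
  rcomp_mono le_rfl <|
    rcomp_mono (runion_mono hhb (rcomp_mono hhb (rcomp_mono (eco_mono hrf hco) hhb))) le_rfl

theorem psc_mono (hpo : po ≤ po') (hrf : rf ≤ rf') (hco : co ≤ co') (hrmw : rmw ≤ rmw') :
    psc loc W Wrlx Erel Eacq F Esc Fsc incl po rf co rmw ≤
      psc loc W Wrlx Erel Eacq F Esc Fsc incl po' rf' co' rmw' :=
  runion_mono (pscb_mono hpo hrf hco hrmw) (pscf_mono hpo hrf hco hrmw)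

end SRC11

/-- a sub-execution of an SRC11-consistent execution is
SRC11-consistent (restriction case of Lemma A.1). -/
theorem subexecution_consistent {E Loc : Type*} (loc : E → Loc)
    (W Wrlx Erel Eacq F Esc Fsc : E → Prop) (incl : E → E → Prop)
    (po po' rf rf' co co' rmw rmw' : E → E → Prop)
    (hpo : ∀ a b, po a b → po' a b)
    (hrf : ∀ a b, rf a b → rf' a b)
    (hco : ∀ a b, co a b → co' a b)
    (hrmw : ∀ a b, rmw a b → rmw' a b)
    -- (Coherence) for the primed execution
    (hCoh' : SRC11.Irrefl (SRC11.rcomp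
      (SRC11.hb loc W Wrlx Erel Eacq F incl po' rf' rmw')
      (SRC11.ropt (SRC11.eco rf' co'))))
    -- (Atomicity) for the primed execution
    (hAt' : ∀ a b, ¬ SRC11.rinter rmw'
      (SRC11.rcomp (SRC11.fr rf' co') co') a b)
    -- (SC) for the primed execution
    (hSC' : SRC11.Acyclic (SRC11.rinter incl
      (SRC11.psc loc W Wrlx Erel Eacq F Esc Fsc incl po' rf' co' rmw')))
    -- (No-Thin-Air) for the primed execution
    (hNTA' : SRC11.Acyclic (SRC11.runion po' rf')) :
    SRC11.Irrefl (SRC11.rcomp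
      (SRC11.hb loc W Wrlx Erel Eacq F incl po rf rmw)
      (SRC11.ropt (SRC11.eco rf co))) ∧
    (∀ a b, ¬ SRC11.rinter rmw (SRC11.rcomp (SRC11.fr rf co) co) a b) ∧
    SRC11.Acyclic (SRC11.rinter incl
      (SRC11.psc loc W Wrlx Erel Eacq F Esc Fsc incl po rf co rmw)) ∧
    SRC11.Acyclic (SRC11.runion po rf) := by
  open SRC11 in
  refine ⟨?coherence, ?atomicity, ?sc, ?noThinAir⟩
  case coherence =>
    exact hCoh'.anti (rcomp_mono (hb_mono hpo hrf hrmw) (ropt_mono (eco_mono hrf hco)))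
  case atomicity =>
    exact fun a b h => hAt' a b (rinter_mono hrmw (rcomp_mono (fr_mono hrf hco) hco) a b h)
  case sc =>
    exact hSC'.anti (rinter_mono le_rfl (psc_mono hpo hrf hco hrmw))
  case noThinAir =>
    exact hNTA'.anti (runion_mono hpo hrf)
end
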